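/- Given a nonzero vector η' = (x', y', z') in R³, setting χ = atan2(y', x') and ν = atan2(−z', √(x'² + y'²)), the unit quaternion Q_p = Q_z(χ) Q_y(ν) satisfies Q_p (1,0,0) Q_p* = η'/‖η'‖. -/

import Mathlib

open Real Quaternion

/-- The four-quadrant inverse tangent `atan2 y x`, defined via the complex argument. -/
noncomputable def atan2 (y x : ℝ) : ℝ := Complex.arg ⟨x, y⟩

/-- The pure quaternion corresponding to the vector `(x, y, z) ∈ ℝ³`. -/
noncomputable def pureQ (x y z : ℝ) : Quaternion ℝ := ⟨0, x, y, z⟩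

/-- Rotation quaternion about the `z`-axis by angle `χ`. -/
noncomputable def Qz (χ : ℝ) : Quaternion ℝ := ⟨Real.cos (χ / 2), 0, 0, Real.sin (χ / 2)⟩

/-- Rotation quaternion about the `y`-axis by angle `ν`. -/
noncomputable def Qy (ν : ℝ) : Quaternion ℝ := ⟨Real.cos (ν / 2), 0, Real.sin (ν / 2), 0⟩

/-!
Conjugation by `Qy ν` rotates ℝ³ by `ν` about the `y`-axis and conjugation by `Qz χ` by `χ`
about the `z`-axis, so `Q_p e₁ Q_p*` is the unit vector `(cos χ cos ν, sin χ cos ν, -sin ν)`.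
Since `atan2 y x` is the argument of `x + y i`, we have `r cos χ = x'`, `r sin χ = y'` with
`r = √(x'² + y'²)`, and `R cos ν = r`, `R sin ν = -z'` with `R = √(r² + z'²) = ‖η'‖`. These
identities also hold when `r = 0`, so dividing by `R ≠ 0` gives the claim without a case split.
-/

theorem Qy_mul_pureQ_mul_star (ν a b c : ℝ) :
    Qy ν * pureQ a b c * star (Qy ν) =
      pureQ (a * cos ν + c * sin ν) b (c * cos ν - a * sin ν) := by
  obtain ⟨θ, rfl⟩ : ∃ θ, ν = 2 * θ := ⟨ν / 2, by ring⟩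
  ext
  all_goals
    simp only [re_mul, imI_mul, imJ_mul, imK_mul, re_star, imI_star, imJ_star, imK_star]
    simp only [Qy, pureQ, mul_div_cancel_left₀ θ two_ne_zero, cos_two_mul', sin_two_mul]
  · ring
  · ring
  · linear_combination b * sin_sq_add_cos_sq θ
  · ring

theorem Qz_mul_pureQ_mul_star (χ a b c : ℝ) :
    Qz χ * pureQ a b c * star (Qz χ) =
      pureQ (a * cos χ - b * sin χ) (a * sin χ + b * cos χ) c := by
  obtain ⟨θ, rfl⟩ : ∃ θ, χ = 2 * θ := ⟨χ / 2, by ring⟩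
  ext
  all_goals
    simp only [re_mul, imI_mul, imJ_mul, imK_mul, re_star, imI_star, imJ_star, imK_star]
    simp only [Qz, pureQ, mul_div_cancel_left₀ θ two_ne_zero, cos_two_mul', sin_two_mul]
  · ring
  · ring
  · ring
  · linear_combination c * sin_sq_add_cos_sq θ

theorem Qz_mul_Qy_mul_pureQ_one_mul_star (χ ν : ℝ) :
    Qz χ * Qy ν * pureQ 1 0 0 * star (Qz χ * Qy ν) =
      pureQ (cos χ * cos ν) (sin χ * cos ν) (-sin ν) := by
  calc Qz χ * Qy ν * pureQ 1 0 0 * star (Qz χ * Qy ν)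
      = Qz χ * (Qy ν * pureQ 1 0 0 * star (Qy ν)) * star (Qz χ) := by
        simp only [star_mul, mul_assoc]
    _ = pureQ (cos χ * cos ν) (sin χ * cos ν) (-sin ν) := by
        rw [Qy_mul_pureQ_mul_star, Qz_mul_pureQ_mul_star]
        congr 1 <;> ring

theorem sqrt_mul_cos_atan2 (y x : ℝ) : √(x ^ 2 + y ^ 2) * cos (atan2 y x) = x := by
  simpa [atan2, Complex.norm_eq_sqrt_sq_add_sq] using Complex.norm_mul_cos_arg ⟨x, y⟩

theorem sqrt_mul_sin_atan2 (y x : ℝ) : √(x ^ 2 + y ^ 2) * sin (atan2 y x) = y := by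
  simpa [atan2, Complex.norm_eq_sqrt_sq_add_sq] using Complex.norm_mul_sin_arg ⟨x, y⟩

/-- For a nonzero `η' = (x', y', z') ∈ ℝ³`, with
`χ = atan2(y', x')` and `ν = atan2(−z', √(x'² + y'²))`, the unit quaternion
`Q_p = Q_z(χ) Q_y(ν)` satisfies `Q_p (1,0,0) Q_p* = η'/‖η'‖`. -/
theorem stmt11 (x' y' z' : ℝ) (hne : (x', y', z') ≠ (0, 0, 0)) :
    Qz (atan2 y' x') * Qy (atan2 (-z') (Real.sqrt (x' ^ 2 + y' ^ 2))) * pureQ 1 0 0 *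
        star (Qz (atan2 y' x') * Qy (atan2 (-z') (Real.sqrt (x' ^ 2 + y' ^ 2)))) =
      pureQ (x' / Real.sqrt (x' ^ 2 + y' ^ 2 + z' ^ 2))
            (y' / Real.sqrt (x' ^ 2 + y' ^ 2 + z' ^ 2))
            (z' / Real.sqrt (x' ^ 2 + y' ^ 2 + z' ^ 2)) := by
  set χ := atan2 y' x'
  set r := √(x' ^ 2 + y' ^ 2)
  set R := √(x' ^ 2 + y' ^ 2 + z' ^ 2)
  have hR : √(r ^ 2 + (-z') ^ 2) = R := by rw [sq_sqrt (by positivity), neg_sq]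
  have hR0 : R ≠ 0 := by
    refine (sqrt_pos.2 ?_).ne'
    contrapose! hne
    simp only [Prod.mk.injEq]
    refine ⟨?_, ?_, ?_⟩ <;> nlinarith [sq_nonneg x', sq_nonneg y', sq_nonneg z']
  have hcosχ : r * cos χ = x' := sqrt_mul_cos_atan2 y' x'
  have hsinχ : r * sin χ = y' := sqrt_mul_sin_atan2 y' x'
  have hcosν := sqrt_mul_cos_atan2 (-z') r
  have hsinν := sqrt_mul_sin_atan2 (-z') r
  rw [hR] at hcosν hsinν
  rw [Qz_mul_Qy_mul_pureQ_one_mul_star]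
  congr 1 <;> rw [eq_div_iff hR0]
  · linear_combination cos χ * hcosν + hcosχ
  · linear_combination sin χ * hcosν + hsinχ
  · linear_combination -hsinν
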